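/- arXiv:math/9909199 — 2 statements merged into one kernel-verified Lean document; each statement's English description precedes it below -/
import Mathlib

section
/- Suppose λ ∈ ℝ^n satisfies S_k(λ + η) ≥ 0 for every vector η ∈ ℝ^n with all coordinates η_i ≥ 0. Then S_j(λ) ≥ 0 for every j = 1, ..., k. -/
/-!
The cone condition `0 ≤ S_{m+1}(λ + η)` for all `η ≥ 0` is inherited by `S_m` as long as
`m < n`, so it descends from `k` down to `j`, and `η = 0` gives the claim.

For the descent, `S_{m+1}` is affine in each coordinate: `S_{m+1}(λ) = S_{m+1}(λ_{≠i}) +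
λ_i S_m(λ_{≠i})`, where `λ_{≠i}` omits the `i`-th coordinate. Moving along `η = t e_i` with
`t → ∞` forces the slope `S_m(λ_{≠i})` to be nonnegative, and summing over `i` gives
`(n - m) S_m(λ) ≥ 0`, since each `m`-subset omits exactly `n - m` indices.
-/

/-- The `k`-th elementary symmetric polynomial of `l : Fin n → ℝ`. -/
noncomputable def esymmS (n k : ℕ) (l : Fin n → ℝ) : ℝ :=
  ∑ A ∈ Finset.powersetCard k (Finset.univ : Finset (Fin n)), ∏ i ∈ A, l i

open Finset

lemma nonneg_of_forall_nonneg_add_mul {a b : ℝ} (h : ∀ t, 0 ≤ t → 0 ≤ a + t * b) : 0 ≤ b := by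
  by_contra! hb
  have := h ((|a| + 1) / -b) (div_nonneg (by positivity) (by linarith))
  rw [div_mul_eq_mul_div, div_neg, mul_div_cancel_right₀ _ hb.ne] at this
  linarith [le_abs_self a]

noncomputable def esymmSErase (n m : ℕ) (l : Fin n → ℝ) (i : Fin n) : ℝ :=
  ∑ B ∈ (univ.erase i).powersetCard m, ∏ j ∈ B, l j

lemma esymmS_succ_eq_esymmSErase_add (n m : ℕ) (l : Fin n → ℝ) (i : Fin n) :
    esymmS n (m + 1) l = esymmSErase n (m + 1) l i + l i * esymmSErase n m l i := by
  have hi : i ∉ univ.erase i := notMem_erase i univ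
  have hiB : ∀ B ∈ (univ.erase i).powersetCard m, i ∉ B :=
    fun B hB => notMem_mono (mem_powersetCard.1 hB).1 hi
  rw [esymmS, ← insert_erase (mem_univ i), powersetCard_succ_insert hi, sum_union, sum_image,
    esymmSErase, esymmSErase, mul_sum]
  · exact congrArg _ (sum_congr rfl fun B hB => prod_insert (hiB B hB))
  · exact insert_erase_invOn.2.injOn.mono hiB
  · refine disjoint_left.2 fun A hA hA' => ?_
    obtain ⟨B, -, rfl⟩ := mem_image.1 hA'
    exact hi ((mem_powersetCard.1 hA).1 (mem_insert_self i B))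

lemma esymmSErase_add_single (n m : ℕ) (l : Fin n → ℝ) (i : Fin n) (t : ℝ) :
    esymmSErase n m (l + Pi.single i t) i = esymmSErase n m l i := by
  refine sum_congr rfl fun B hB => prod_congr rfl fun j hj => ?_
  have hji : j ≠ i := ne_of_mem_erase ((mem_powersetCard.1 hB).1 hj)
  simp [hji]

lemma sum_esymmSErase (n m : ℕ) (l : Fin n → ℝ) :
    ∑ i, esymmSErase n m l i = ((n - m : ℕ) : ℝ) * esymmS n m l := by
  rw [esymmS, mul_sum]
  unfold esymmSErase
  rw [sum_comm' (t' := univ.powersetCard m) (s' := fun B => Bᶜ)]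
  · refine sum_congr rfl fun B hB => ?_
    rw [sum_const, card_compl, Fintype.card_fin, (mem_powersetCard.1 hB).2, nsmul_eq_mul]
  · intro i B
    simp [subset_erase]

lemma esymmSErase_nonneg {n m : ℕ} {l : Fin n → ℝ}
    (h : ∀ η : Fin n → ℝ, 0 ≤ η → 0 ≤ esymmS n (m + 1) (l + η)) (i : Fin n) :
    0 ≤ esymmSErase n m l i := by
  refine nonneg_of_forall_nonneg_add_mul
    (a := esymmSErase n (m + 1) l i + l i * esymmSErase n m l i) fun t ht => ?_
  have := h (Pi.single i t) (Pi.single_nonneg.2 ht)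
  rwa [esymmS_succ_eq_esymmSErase_add _ _ _ i, esymmSErase_add_single, esymmSErase_add_single,
    Pi.add_apply, Pi.single_eq_same, add_mul, ← add_assoc] at this

lemma esymmS_nonneg_of_forall_esymmS_succ_add_nonneg {n m : ℕ} (hm : m < n) {l : Fin n → ℝ}
    (h : ∀ η : Fin n → ℝ, 0 ≤ η → 0 ≤ esymmS n (m + 1) (l + η)) : 0 ≤ esymmS n m l := by
  have hsum : 0 ≤ ((n - m : ℕ) : ℝ) * esymmS n m l :=
    sum_esymmSErase n m l ▸ sum_nonneg fun i _ => esymmSErase_nonneg h i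
  exact nonneg_of_mul_nonneg_right hsum (by exact_mod_cast Nat.sub_pos_of_lt hm)

lemma forall_esymmS_add_nonneg_of_succ {n m : ℕ} (hm : m < n) {l : Fin n → ℝ}
    (h : ∀ η : Fin n → ℝ, 0 ≤ η → 0 ≤ esymmS n (m + 1) (l + η)) :
    ∀ η : Fin n → ℝ, 0 ≤ η → 0 ≤ esymmS n m (l + η) := fun η hη =>
  esymmS_nonneg_of_forall_esymmS_succ_add_nonneg hm fun η' hη' =>
    add_assoc l η η' ▸ h (η + η') (add_nonneg hη hη')

theorem stmt3_general (n k : ℕ) (hkn : k ≤ n) (lam : Fin n → ℝ)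
    (h : ∀ eta : Fin n → ℝ, (∀ i, 0 ≤ eta i) → 0 ≤ esymmS n k (lam + eta)) :
    ∀ j, 1 ≤ j → j ≤ k → 0 ≤ esymmS n j lam := by
  intro j _ hjk
  have hcone : ∀ η : Fin n → ℝ, 0 ≤ η → 0 ≤ esymmS n j (lam + η) :=
    Nat.decreasingInduction
      (motive := fun m _ => ∀ η : Fin n → ℝ, 0 ≤ η → 0 ≤ esymmS n m (lam + η))
      (fun m hm ih => forall_esymmS_add_nonneg_of_succ (hm.trans_le hkn) ih) h hjk
  simpa using hcone 0 le_rfl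

/-- If S_k(λ+η) ≥ 0 for all η ≥ 0, then S_j(λ) ≥ 0 for j = 1,…,k. -/
theorem stmt3 (n k : ℕ) (hk1 : 1 ≤ k) (hkn : k ≤ n) (lam : Fin n → ℝ)
    (h : ∀ eta : Fin n → ℝ, (∀ i, 0 ≤ eta i) → 0 ≤ esymmS n k (lam + eta)) :
    ∀ j, 1 ≤ j → j ≤ k → 0 ≤ esymmS n j lam :=
  stmt3_general n k hkn lam h
end

section
/- If λ ∈ Γ_k (i.e. S_j(λ) ≥ 0 for j = 1,...,k) and η ∈ ℝ^n has all coordinates nonnegative, then 0 ≤ S_k(λ) ≤ S_k(λ + η); that is, S_k is monotone on Γ_k with respect to coordinatewise increases. -/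
/-!
Expanding in one coordinate, `S_j(a, u) = S_j(u) + a S_{j-1}(u)`, so raising one coordinate of
`λ ∈ Γ_k` by `b ≥ 0` raises each `S_j`, `j ≤ k`, by `b S_{j-1}(u)`. It therefore suffices that
deleting a coordinate maps `Γ_k` into `Γ_{k-1}`. If `S_j(u) < 0` were the first failure, the cone
conditions at `j` and `j + 1` would give `S_{j-1}(u) S_{j+1}(u) ≥ S_j(u)²`, contradicting Newton's
inequality `E_{j-1} E_{j+1} ≤ E_j²` for the means `E_i = S_i / C(N, i)`, made strict by the strict
log-concavity of `C(N, ·)`. Newton's inequality itself follows from Rolle's theorem: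
differentiating `∏ (X + a_i)` keeps it real-rooted and preserves `E_0, …, E_{N-1}`, which reduces
it to `N = j + 2`, settled by induction on `j`.
-/

open Polynomial

theorem Nat.choose_mul_choose_lt_sq {n k : ℕ} (h : k < n) :
    n.choose k * n.choose (k + 2) < n.choose (k + 1) ^ 2 := by
  have h1 := Nat.choose_succ_right_eq n k
  have h2 := Nat.choose_succ_right_eq n (k + 1)
  have hpos : 0 < n.choose k * n.choose (k + 1) :=
    Nat.mul_pos (Nat.choose_pos h.le) (Nat.choose_pos h)
  obtain ⟨e, rfl⟩ : ∃ e, n = k + 1 + e := ⟨n - k - 1, by omega⟩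
  rw [show k + 1 + e - k = e + 1 by omega] at h1
  rw [show k + 1 + e - (k + 1) = e by omega] at h2
  generalize (k + 1 + e).choose k = a at *
  generalize (k + 1 + e).choose (k + 1) = b at *
  generalize (k + 1 + e).choose (k + 2) = c at *
  refine Nat.lt_of_mul_lt_mul_right (a := (k + 1) * (k + 2)) ?_
  calc a * c * ((k + 1) * (k + 2)) = a * b * (e * (k + 1)) := by
        rw [show a * c * ((k + 1) * (k + 2)) = a * (c * (k + 1 + 1)) * (k + 1) by ring, h2]; ring
    _ < a * b * ((e + 1) * (k + 2)) := Nat.mul_lt_mul_of_pos_left (by nlinarith) hpos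
    _ = b ^ 2 * ((k + 1) * (k + 2)) := by
        rw [show b ^ 2 * ((k + 1) * (k + 2)) = b * (k + 1) * b * (k + 2) by ring, h1]; ring

theorem Polynomial.Splits.derivative {p : ℝ[X]} (hp : p.Splits) : p.derivative.Splits := by
  rw [splits_iff_card_roots] at hp ⊢
  have := card_roots_le_derivative p
  have := card_roots' (Polynomial.derivative p)
  have := natDegree_derivative_le p
  omega

namespace Multiset

section CommSemiring

variable {R : Type*} [CommSemiring R]

@[simp]
theorem esymm_zero (s : Multiset R) : s.esymm 0 = 1 := by
  simp [esymm]

theorem esymm_eq_zero_of_card_lt {s : Multiset R} {j : ℕ} (h : card s < j) : s.esymm j = 0 := by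
  simp [esymm, powersetCard_eq_empty _ h]

theorem esymm_cons_succ (a : R) (s : Multiset R) (j : ℕ) :
    (a ::ₘ s).esymm (j + 1) = s.esymm (j + 1) + a * s.esymm j := by
  simp [esymm, powersetCard_cons, ← sum_map_mul_left]

theorem natDegree_prod_X_add_C [Nontrivial R] (s : Multiset R) :
    (s.map (X + C ·)).prod.natDegree = card s := by
  rw [natDegree_multiset_prod_of_monic _ (by simp [monic_X_add_C])]
  simp

end CommSemiring

-- `t` is the multiset of negated roots of the derivative of `∏ (X + a)`.
theorem exists_esymm_derivative {s : Multiset ℝ} {N : ℕ} (hs : card s = N + 1) :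
    ∃ t : Multiset ℝ, card t = N ∧ ∀ i ≤ N, (N + 1) * t.esymm i = (N + 1 - i) * s.esymm i := by
  set P := (s.map (X + C ·)).prod
  have hD : ∀ i ≤ N, (derivative P).coeff (N - i) = (N + 1 - i) * s.esymm i := by
    intro i hi
    rw [coeff_derivative, prod_X_add_C_coeff s (by omega), hs,
      show N + 1 - (N - i + 1) = i by omega, Nat.cast_sub hi]
    ring
  obtain ⟨t, ht⟩ := splits_iff_exists_multiset'.1
    (Splits.multisetProd (by simp [Splits.X_add_C]) : P.Splits).derivative
  set c := (derivative P).leadingCoeff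
  have hDN : (derivative P).coeff N = N + 1 := by simpa using hD 0 (Nat.zero_le _)
  have hc : c ≠ 0 := by
    rw [Ne, leadingCoeff_eq_zero]
    intro h
    rw [h, coeff_zero] at hDN
    linarith
  have hdeg : (derivative P).natDegree = N := by
    refine natDegree_eq_of_le_of_coeff_ne_zero ?_ (by rw [hDN]; positivity)
    calc _ ≤ P.natDegree - 1 := natDegree_derivative_le P
      _ = N := by simp [P, natDegree_prod_X_add_C, hs]
  have htcard : card t = N := by
    rw [← hdeg, ht, natDegree_C_mul hc, natDegree_prod_X_add_C]
  have hcoeff : ∀ i ≤ N, (derivative P).coeff (N - i) = c * t.esymm i := by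
    intro i hi
    rw [ht, coeff_C_mul, prod_X_add_C_coeff t (by omega), htcard,
      show N - (N - i) = i by omega]
  have hcN : c = N + 1 := by simpa [hDN] using (hcoeff 0 (Nat.zero_le _)).symm
  refine ⟨t, htcard, fun i hi => ?_⟩
  rw [← hD i hi, hcoeff i hi, hcN]

theorem esymm_mul_esymm_le_of_card_eq (m : ℕ) :
    ∀ s : Multiset ℝ, card s = m + 2 →
      2 * (m + 2) * (s.esymm m * s.esymm (m + 2)) ≤ (m + 1) * s.esymm (m + 1) ^ 2 := by
  induction m with
  | zero =>
    intro s hs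
    obtain ⟨a, b, rfl⟩ := card_eq_two.1 hs
    rw [show ({a, b} : Multiset ℝ) = a ::ₘ {b} from rfl]
    simp only [Nat.cast_zero, zero_add, esymm_zero, esymm_pair_one, esymm_pair_two]
    nlinarith [sq_nonneg (a - b)]
  | succ m ih =>
    intro s hs
    obtain ⟨a, u, rfl⟩ : ∃ a u, s = a ::ₘ u := by
      obtain ⟨a, ha⟩ := card_pos_iff_exists_mem.1 (by omega : 0 < card s)
      exact ⟨a, _, (cons_erase ha).symm⟩
    have hu : card u = m + 2 := by simpa using hs
    have hlast : u.esymm (m + 3) = 0 := esymm_eq_zero_of_card_lt (by omega)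
    simp only [esymm_cons_succ, hlast]
    push_cast
    nlinarith [sq_nonneg ((m + 2) * u.esymm (m + 2) - a * u.esymm (m + 1)),
      mul_nonneg (sq_nonneg a) (sub_nonneg.2 (ih u hu))]

noncomputable def esymmMean (s : Multiset ℝ) (i : ℕ) : ℝ :=
  s.esymm i / (card s).choose i

theorem esymm_eq_esymmMean_mul_choose (s : Multiset ℝ) (i : ℕ) :
    s.esymm i = s.esymmMean i * (card s).choose i := by
  rcases lt_or_ge (card s) i with h | h
  · simp [esymmMean, esymm_eq_zero_of_card_lt h]
  · rw [esymmMean, div_mul_cancel₀]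
    exact_mod_cast (Nat.choose_pos h).ne'

theorem exists_esymmMean_eq_of_card_eq_succ {s : Multiset ℝ} {N : ℕ} (hs : card s = N + 1) :
    ∃ t : Multiset ℝ, card t = N ∧ ∀ i ≤ N, t.esymmMean i = s.esymmMean i := by
  obtain ⟨t, ht, hst⟩ := exists_esymm_derivative hs
  refine ⟨t, ht, fun i hi => ?_⟩
  have hchoose : (N.choose i : ℝ) * (N + 1) = (N + 1).choose i * (N + 1 - i) := by
    have := congrArg (Nat.cast : ℕ → ℝ) (Nat.choose_mul_succ_eq N i)
    push_cast [Nat.cast_sub (by omega : i ≤ N + 1)] at this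
    exact this
  have hpos : (0 : ℝ) < N.choose i := by exact_mod_cast Nat.choose_pos hi
  have hpos' : (0 : ℝ) < (N + 1).choose i := by exact_mod_cast Nat.choose_pos (by omega)
  have hne : (N + 1 - i : ℝ) ≠ 0 := by
    have : (i : ℝ) ≤ N := by exact_mod_cast hi
    linarith
  rw [esymmMean, esymmMean, ht, hs, div_eq_div_iff hpos.ne' hpos'.ne']
  refine mul_right_cancel₀ hne ?_
  linear_combination (-t.esymm i) * hchoose + (N.choose i : ℝ) * hst i hi

theorem esymmMean_mul_le_sq_of_card_eq {s : Multiset ℝ} {j : ℕ} (hs : card s = j + 2) :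
    s.esymmMean j * s.esymmMean (j + 2) ≤ s.esymmMean (j + 1) ^ 2 := by
  have hchoose : ((j + 2).choose j : ℝ) * 2 = (j + 2) * (j + 1) := by
    have := Nat.choose_succ_right_eq (j + 2) j
    rw [Nat.choose_succ_self_right, show j + 2 - j = 2 by omega] at this
    exact_mod_cast this.symm
  have hpos : (0 : ℝ) < (j + 2).choose j := by exact_mod_cast Nat.choose_pos (by omega)
  rw [esymmMean, esymmMean, esymmMean, hs, Nat.choose_self, Nat.choose_succ_self_right]
  rw [div_mul_div_comm, div_pow, div_le_div_iff₀ (by positivity) (by positivity)]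
  push_cast
  nlinarith [esymm_mul_esymm_le_of_card_eq j s hs, sq_nonneg (s.esymm (j + 1))]

theorem esymmMean_mul_le_sq (s : Multiset ℝ) (j : ℕ) :
    s.esymmMean j * s.esymmMean (j + 2) ≤ s.esymmMean (j + 1) ^ 2 := by
  rcases lt_or_ge (card s) (j + 2) with hlt | hge
  · simp [esymmMean, esymm_eq_zero_of_card_lt hlt, sq_nonneg]
  obtain ⟨N, hN⟩ := Nat.exists_eq_add_of_le' hge
  induction N generalizing s with
  | zero => exact esymmMean_mul_le_sq_of_card_eq (by omega)
  | succ N ih =>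
    obtain ⟨t, ht, hts⟩ :=
      exists_esymmMean_eq_of_card_eq_succ (s := s) (N := N + (j + 2)) (by omega)
    rw [← hts j (by omega), ← hts (j + 1) (by omega), ← hts (j + 2) (by omega)]
    exact ih t (by omega) ht

theorem esymm_mul_esymm_lt_sq {s : Multiset ℝ} {m : ℕ} (h : s.esymm (m + 1) ≠ 0) :
    s.esymm m * s.esymm (m + 2) < s.esymm (m + 1) ^ 2 := by
  have hcard : m < card s := by
    by_contra! hlt
    exact h (esymm_eq_zero_of_card_lt (by omega))
  have hchoose :
      ((card s).choose m : ℝ) * (card s).choose (m + 2) < (card s).choose (m + 1) ^ 2 := by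
    exact_mod_cast Nat.choose_mul_choose_lt_sq hcard
  simp only [esymm_eq_esymmMean_mul_choose s] at h ⊢
  have hmean : 0 < s.esymmMean (m + 1) ^ 2 := by
    have := left_ne_zero_of_mul h
    positivity
  calc s.esymmMean m * (card s).choose m * (s.esymmMean (m + 2) * (card s).choose (m + 2))
      = s.esymmMean m * s.esymmMean (m + 2) * ((card s).choose m * (card s).choose (m + 2)) := by
        ring
    _ ≤ s.esymmMean (m + 1) ^ 2 * ((card s).choose m * (card s).choose (m + 2)) :=
        mul_le_mul_of_nonneg_right (esymmMean_mul_le_sq s m) (by positivity)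
    _ < s.esymmMean (m + 1) ^ 2 * (card s).choose (m + 1) ^ 2 :=
        mul_lt_mul_of_pos_left hchoose hmean
    _ = (s.esymmMean (m + 1) * (card s).choose (m + 1)) ^ 2 := by ring

/-- The Gårding cone `Γ_k`; the condition at `j = 0` is vacuous since `esymm 0 = 1`. -/
def gardingCone (k : ℕ) : Set (Multiset ℝ) :=
  {s | ∀ j ≤ k, 0 ≤ s.esymm j}

theorem gardingCone_antitone : Antitone gardingCone :=
  fun _ _ hkl _ hs j hj => hs j (hj.trans hkl)

theorem mem_gardingCone_of_cons_mem {a : ℝ} {u : Multiset ℝ} :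
    ∀ {k : ℕ}, a ::ₘ u ∈ gardingCone (k + 1) → u ∈ gardingCone k
  | 0, _ => fun j hj => by simp [Nat.le_zero.1 hj]
  | k + 1, h => by
    have hu : u ∈ gardingCone k :=
      mem_gardingCone_of_cons_mem (gardingCone_antitone (by omega) h)
    intro j hj
    rcases Nat.lt_or_ge j (k + 1) with hj' | hj'
    · exact hu j (by omega)
    obtain rfl : j = k + 1 := by omega
    by_contra! hneg
    have h1 := h (k + 1) (by omega)
    have h2 := h (k + 2) le_rfl
    rw [esymm_cons_succ] at h1 h2
    have : u.esymm (k + 1) ^ 2 ≤ u.esymm k * u.esymm (k + 2) := by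
      nlinarith [hu k le_rfl]
    exact (esymm_mul_esymm_lt_sq hneg.ne).not_ge this

theorem esymm_cons_le_esymm_add_cons {a b : ℝ} {u : Multiset ℝ} {k : ℕ}
    (hu : a ::ₘ u ∈ gardingCone k) (hb : 0 ≤ b) {j : ℕ} (hj : j ≤ k) :
    (a ::ₘ u).esymm j ≤ ((a + b) ::ₘ u).esymm j := by
  cases j with
  | zero => simp
  | succ j =>
    have := mem_gardingCone_of_cons_mem (gardingCone_antitone hj hu) j le_rfl
    rw [esymm_cons_succ, esymm_cons_succ]
    nlinarith

end Multiset

open Finset Multiset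

theorem Finset.univ_val_map_update {ι α : Type*} [Fintype ι] [DecidableEq ι]
    (l : ι → α) (a : ι) (x : α) :
    univ.val.map (Function.update l a x) = x ::ₘ (univ.erase a).val.map l := by
  conv_lhs => rw [← insert_erase (mem_univ a), insert_val_of_notMem (notMem_erase a _)]
  rw [Multiset.map_cons, Function.update_self]
  congr 1
  refine Multiset.map_congr rfl fun i hi => Function.update_of_ne ?_ _ _
  exact ne_of_mem_erase hi

section Fintype

variable {ι : Type*} [Fintype ι] [DecidableEq ι]

theorem esymm_le_esymm_update_add {k : ℕ} {l : ι → ℝ} (hl : univ.val.map l ∈ gardingCone k)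
    (a : ι) {b : ℝ} (hb : 0 ≤ b) {j : ℕ} (hj : j ≤ k) :
    (univ.val.map l).esymm j ≤ (univ.val.map (Function.update l a (l a + b))).esymm j := by
  have hl_eq : univ.val.map l = l a ::ₘ (univ.erase a).val.map l := by
    simpa using univ_val_map_update l a (l a)
  rw [hl_eq] at hl ⊢
  rw [univ_val_map_update]
  exact esymm_cons_le_esymm_add_cons hl hb hj

theorem esymm_le_esymm_add {k : ℕ} {l η : ι → ℝ} (hl : univ.val.map l ∈ gardingCone k)
    (hη : 0 ≤ η) {j : ℕ} (hj : j ≤ k) :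
    (univ.val.map l).esymm j ≤ (univ.val.map (l + η)).esymm j := by
  have key : ∀ F : Finset ι, ∀ j ≤ k,
      (univ.val.map l).esymm j ≤ (univ.val.map (l + F.piecewise η 0)).esymm j := by
    intro F
    induction F using Finset.induction_on with
    | empty => simp
    | insert a F ha ih =>
      set g := l + F.piecewise η 0
      have hg : univ.val.map g ∈ gardingCone k := fun j hj => (hl j hj).trans (ih j hj)
      have hstep : l + (insert a F).piecewise η 0 = Function.update g a (g a + η a) := by
        funext i
        by_cases hi : i = a <;> simp [g, hi, ha]
      intro j hj
      rw [hstep]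
      exact (ih j hj).trans (esymm_le_esymm_update_add hg a (hη a) hj)
  simpa using key univ j hj

end Fintype

theorem esymmS_eq_esymm (n k : ℕ) (l : Fin n → ℝ) :
    esymmS n k l = (univ.val.map l).esymm k :=
  (esymm_map_val l univ k).symm

theorem stmt6_general (n k : ℕ) (lam eta : Fin n → ℝ)
    (hlam : ∀ j, 1 ≤ j → j ≤ k → 0 ≤ esymmS n j lam) (heta : ∀ i, 0 ≤ eta i) :
    0 ≤ esymmS n k lam ∧ esymmS n k lam ≤ esymmS n k (lam + eta) := by
  have hcone : univ.val.map lam ∈ gardingCone k := by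
    rintro (_ | j) hj
    · simp
    · simpa [esymmS_eq_esymm] using hlam (j + 1) (by omega) hj
  simp only [esymmS_eq_esymm]
  exact ⟨hcone k le_rfl, esymm_le_esymm_add hcone heta le_rfl⟩

/-- Monotonicity of S_k on Γ_k: if λ ∈ Γ_k and η ≥ 0 then 0 ≤ S_k(λ) ≤ S_k(λ+η). -/
theorem stmt6 (n k : ℕ) (hk1 : 1 ≤ k) (hkn : k ≤ n) (lam eta : Fin n → ℝ)
    (hlam : ∀ j, 1 ≤ j → j ≤ k → 0 ≤ esymmS n j lam) (heta : ∀ i, 0 ≤ eta i) :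
    0 ≤ esymmS n k lam ∧ esymmS n k lam ≤ esymmS n k (lam + eta) :=
  stmt6_general n k lam eta hlam heta
end
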